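/- Let n ≥ 2 and let p_1(z),...,p_m(z) be homogeneous polynomials of degree d ≥ 1 in z = (z_1,...,z_n) ∈ ℂⁿ that are linearly independent in ℂ[z]. Let k ≥ 0 and suppose there exist k+1 solutions (Q^(1), r^(1)(z)), ..., (Q^(k+1), r^(k+1)(z)) of the polynomial identity p(z)Q = r(z)z that are linearly independent (equivalently, the matrices Q^(1),...,Q^(k+1) are linearly independent in the space of complex m×n matrices, or equivalently r^(1),...,r^(k+1) are linearly independent polynomials). Then m ≥ Σ_{j=0}^{k} (n−j). -/

import Mathlib

/-!
Fix a monomial order. The leading exponents of the nonzero elements of a finite-dimensional space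
of polynomials are exactly as many as its dimension. The identity `p Q = r z` makes the `r_i`
independent and puts `z_ν · span r` inside `span p`, so every `a + e_ν`, with `a` a leading
exponent of `span r`, is a leading exponent of `span p`. Among the `k + 1` leading exponents of
`span r`, the `j`-th one gives at least `n - j` points `a + e_ν` not obtained from the earlier ones,
because two distinct exponents `a ≠ b` satisfy `a + e_ν = b + e_ν'` for at most one `ν`.
-/

open MvPolynomial

namespace Finsupp

variable {σ : Type*} [Fintype σ] [DecidableEq σ]

noncomputable def unitShifts (a : σ →₀ ℕ) : Finset (σ →₀ ℕ) :=
  Finset.univ.image fun ν => a + single ν 1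

theorem mem_unitShifts {a b : σ →₀ ℕ} : b ∈ unitShifts a ↔ ∃ ν, a + single ν 1 = b := by
  simp [unitShifts]

theorem card_unitShifts (a : σ →₀ ℕ) : (unitShifts a).card = Fintype.card σ :=
  Finset.card_image_of_injective _ <|
    (add_right_injective a).comp (single_left_injective one_ne_zero)

theorem card_unitShifts_inter_unitShifts_le_one {a b : σ →₀ ℕ} (hab : a ≠ b) :
    (unitShifts a ∩ unitShifts b).card ≤ 1 := by
  rw [Finset.card_le_one]
  simp only [Finset.mem_inter, mem_unitShifts]
  rintro _ ⟨⟨ν, rfl⟩, ν', hν'⟩ _ ⟨⟨ω, rfl⟩, ω', hω'⟩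
  have hνν' : ν' ≠ ν := by
    rintro rfl
    exact hab (add_right_cancel hν').symm
  -- At `ν`, the first identity forces `b ν = a ν + 1`, and then the second forces `ω = ν`.
  have h₁ := congrArg (· ν) hν'
  have h₂ := congrArg (· ν) hω'
  simp only [Finsupp.add_apply, single_apply, if_neg hνν', ↓reduceIte] at h₁ h₂
  have hων : ω = ν := by
    by_contra hων
    rw [if_neg hων] at h₂
    split_ifs at h₂ <;> omega
  rw [hων]

theorem sum_range_card_sub_le_card_biUnion_unitShifts (A : Finset (σ →₀ ℕ)) :
    ∑ j ∈ Finset.range A.card, (Fintype.card σ - j) ≤ (A.biUnion unitShifts).card := by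
  induction A using Finset.induction_on with
  | empty => simp
  | insert a A ha ih =>
    have hinter : (unitShifts a ∩ A.biUnion unitShifts).card ≤ A.card := by
      rw [Finset.inter_biUnion]
      refine Finset.card_biUnion_le.trans ?_
      simpa using Finset.sum_le_sum fun b hb =>
        card_unitShifts_inter_unitShifts_le_one (a := a) (b := b) (ne_of_mem_of_not_mem hb ha).symm
    have hunion := Finset.card_union_add_card_inter (unitShifts a) (A.biUnion unitShifts)
    rw [Finset.card_insert_of_notMem ha, Finset.sum_range_succ, Finset.biUnion_insert]
    have hsub : (A.biUnion unitShifts).card ≤ (unitShifts a ∪ A.biUnion unitShifts).card :=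
      Finset.card_le_card Finset.subset_union_right
    rw [card_unitShifts] at hunion
    omega

end Finsupp

namespace MonomialOrder

variable {σ : Type*} (m : MonomialOrder σ)

theorem coeff_eq_zero_of_mem_span {R : Type*} [CommSemiring R] {S : Set (MvPolynomial σ R)}
    {d : σ →₀ ℕ} (hS : ∀ q ∈ S, m.toSyn (m.degree q) < m.toSyn d) {q : MvPolynomial σ R}
    (hq : q ∈ Submodule.span R S) : coeff d q = 0 := by
  have hle : Submodule.span R S ≤ LinearMap.ker (lcoeff R d) :=
    Submodule.span_le.mpr fun q hqS => m.coeff_eq_zero_of_lt (hS q hqS)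
  exact hle hq

variable {K : Type*} [Field K]

theorem linearIndependent_of_injective_degree {ι : Type*} {g : ι → MvPolynomial σ K}
    (hg : ∀ i, g i ≠ 0) (hinj : Function.Injective (m.degree ∘ g)) : LinearIndependent K g := by
  classical
  rw [linearIndependent_iff_finset_linearIndependent]
  intro s
  change LinearIndepOn K g s
  induction s using Finset.induction_on_max_value (m.toSyn ∘ m.degree ∘ g) with
  | empty => simp
  | insert a s has hmax ih =>
    rw [Finset.coe_insert]
    refine ih.insert fun hmem => m.coeff_degree_ne_zero_iff.mpr (hg a) ?_
    refine m.coeff_eq_zero_of_mem_span ?_ hmem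
    rintro _ ⟨x, hx, rfl⟩
    refine (hmax x hx).lt_of_ne fun h => ?_
    exact has (hinj (m.toSyn.injective h) ▸ hx)

def degreeSet (V : Submodule K (MvPolynomial σ K)) : Set (σ →₀ ℕ) :=
  m.degree '' (V \ {0} : Set (MvPolynomial σ K))

variable {m}

theorem mem_degreeSet {V : Submodule K (MvPolynomial σ K)} {d : σ →₀ ℕ} :
    d ∈ m.degreeSet V ↔ ∃ q ∈ V, q ≠ 0 ∧ m.degree q = d := by
  simp [degreeSet, and_assoc]

theorem card_le_finrank_of_subset_degreeSet {V : Submodule K (MvPolynomial σ K)}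
    [FiniteDimensional K V] {D : Finset (σ →₀ ℕ)} (hD : ↑D ⊆ m.degreeSet V) :
    D.card ≤ Module.finrank K V := by
  have hrep (d : D) : ∃ q ∈ V, q ≠ 0 ∧ m.degree q = d := mem_degreeSet.mp (hD d.2)
  choose g hgV hg0 hgdeg using hrep
  have hli : LinearIndependent K g :=
    m.linearIndependent_of_injective_degree hg0 fun d e h => Subtype.ext (by simpa [hgdeg] using h)
  have hliV : LinearIndependent K fun d => (⟨g d, hgV d⟩ : V) := .of_comp V.subtype hli
  simpa using hliV.fintype_card_le_finrank

theorem finrank_le_card_of_degreeSet_subset {V : Submodule K (MvPolynomial σ K)}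
    {D : Finset (σ →₀ ℕ)} (hD : m.degreeSet V ⊆ ↑D) : Module.finrank K V ≤ D.card := by
  let coeffsOn : V →ₗ[K] D → K := LinearMap.pi fun d => (lcoeff K d.1).comp V.subtype
  have hinj : Function.Injective coeffsOn := by
    rw [← LinearMap.ker_eq_bot, LinearMap.ker_eq_bot']
    intro q hq
    by_contra hq0
    have hdeg : m.degree q.1 ∈ D := hD (mem_degreeSet.mpr ⟨q, q.2, by simpa using hq0, rfl⟩)
    exact m.coeff_degree_ne_zero_iff.mpr (by simpa using hq0) (congrFun hq ⟨_, hdeg⟩)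
  simpa using LinearMap.finrank_le_finrank_of_injective hinj

theorem degreeSet_finite (V : Submodule K (MvPolynomial σ K)) [FiniteDimensional K V] :
    (m.degreeSet V).Finite := by
  by_contra hinf
  obtain ⟨D, hD, hcard⟩ := Set.Infinite.exists_subset_card_eq hinf (Module.finrank K V + 1)
  have := card_le_finrank_of_subset_degreeSet hD
  omega

theorem add_single_mem_degreeSet {W V : Submodule K (MvPolynomial σ K)}
    (hWV : ∀ q ∈ W, ∀ ν, q * X ν ∈ V) {d : σ →₀ ℕ} (hd : d ∈ m.degreeSet W) (ν : σ) :
    d + Finsupp.single ν 1 ∈ m.degreeSet V := by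
  obtain ⟨q, hqW, hq0, rfl⟩ := mem_degreeSet.mp hd
  refine mem_degreeSet.mpr ⟨q * X ν, hWV q hqW ν, mul_ne_zero hq0 (X_ne_zero ν), ?_⟩
  rw [m.degree_mul hq0 (X_ne_zero ν), m.degree_X]

end MonomialOrder

section Solutions

variable {σ κ ι K : Type*} [Field K] [Fintype κ] {p : κ → MvPolynomial σ K}
  {Q : ι → Matrix κ σ K} {r : ι → MvPolynomial σ K}

theorem mul_X_mem_span_of_sum_smul_eq (hsol : ∀ i ν, ∑ j, Q i j ν • p j = r i * X ν)
    {q : MvPolynomial σ K} (hq : q ∈ Submodule.span K (Set.range r)) (ν : σ) :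
    q * X ν ∈ Submodule.span K (Set.range p) := by
  have hle : Submodule.span K (Set.range r) ≤
      (Submodule.span K (Set.range p)).comap (LinearMap.mulRight K (X ν)) := by
    rw [Submodule.span_le]
    rintro _ ⟨i, rfl⟩
    rw [SetLike.mem_coe, Submodule.mem_comap, LinearMap.mulRight_apply, ← hsol i ν]
    exact Submodule.sum_smul_mem _ _ fun j _ => Submodule.subset_span ⟨j, rfl⟩
  exact hle hq

theorem linearIndependent_of_sum_smul_eq (hp : LinearIndependent K p) (hQ : LinearIndependent K Q)
    (hsol : ∀ i ν, ∑ j, Q i j ν • p j = r i * X ν) : LinearIndependent K r := by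
  let combine : Matrix κ σ K →ₗ[K] σ → MvPolynomial σ K :=
    { toFun := fun Q ν => ∑ j, Q j ν • p j
      map_add' := fun _ _ => by ext1; simp [add_smul, Finset.sum_add_distrib]
      map_smul' := fun _ _ => by ext1; simp [Finset.smul_sum, smul_smul] }
  have hcombine : LinearMap.ker combine = ⊥ := by
    rw [LinearMap.ker_eq_bot']
    intro Q hQ
    ext j ν
    exact Fintype.linearIndependent_iff.mp hp (fun j => Q j ν) (congrFun hQ ν) j
  let mulX : MvPolynomial σ K →ₗ[K] σ → MvPolynomial σ K :=
    LinearMap.pi fun ν => LinearMap.mulRight K (X ν)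
  have hcomp : mulX ∘ r = combine ∘ Q := funext fun i => funext fun ν => (hsol i ν).symm
  exact .of_comp mulX (hcomp ▸ hQ.map' combine hcombine)

end Solutions

theorem m_ge_sum_general (n m k : ℕ)
    (p : Fin m → MvPolynomial (Fin n) ℂ)
    (hli : LinearIndependent ℂ p)
    (Q : Fin (k + 1) → Matrix (Fin m) (Fin n) ℂ)
    (r : Fin (k + 1) → MvPolynomial (Fin n) ℂ)
    (hsol : ∀ i, ∀ ν : Fin n, (∑ j, Q i j ν • p j) = r i * X ν)
    (hQli : LinearIndependent ℂ Q) :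
    (∑ j ∈ Finset.range (k + 1), (n - j)) ≤ m := by
  set W := Submodule.span ℂ (Set.range r)
  set V := Submodule.span ℂ (Set.range p)
  have hW : Module.finrank ℂ W = k + 1 := by
    rw [finrank_span_eq_card (linearIndependent_of_sum_smul_eq hli hQli hsol), Fintype.card_fin]
  have hV : Module.finrank ℂ V = m := by rw [finrank_span_eq_card hli, Fintype.card_fin]
  have : FiniteDimensional ℂ W := .span_of_finite ℂ (Set.finite_range r)
  have : FiniteDimensional ℂ V := .span_of_finite ℂ (Set.finite_range p)
  set o : MonomialOrder (Fin n) := MonomialOrder.lex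
  set A := (o.degreeSet_finite W).toFinset
  have hA : k + 1 ≤ A.card := hW ▸ o.finrank_le_card_of_degreeSet_subset (by simp [A])
  have hshifts : ↑(A.biUnion Finsupp.unitShifts) ⊆ o.degreeSet V := by
    intro e he
    obtain ⟨d, hd, he⟩ := Finset.mem_biUnion.mp he
    obtain ⟨ν, rfl⟩ := Finsupp.mem_unitShifts.mp he
    exact o.add_single_mem_degreeSet (fun q hq => mul_X_mem_span_of_sum_smul_eq hsol hq)
      ((o.degreeSet_finite W).mem_toFinset.mp hd) ν
  calc ∑ j ∈ Finset.range (k + 1), (n - j)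
      ≤ ∑ j ∈ Finset.range A.card, (Fintype.card (Fin n) - j) := by
        rw [Fintype.card_fin]
        exact Finset.sum_le_sum_of_subset (Finset.range_subset_range.mpr hA)
    _ ≤ (A.biUnion Finsupp.unitShifts).card :=
        Finsupp.sum_range_card_sub_le_card_biUnion_unitShifts A
    _ ≤ m := hV ▸ o.card_le_finrank_of_subset_degreeSet hshifts

/-- **Lemma (newlemma1, key counting step).** Let `p_1,...,p_m` be linearly independent
homogeneous polynomials of degree `d ≥ 1` in `n ≥ 2` variables.  If there exist `k+1`
linearly independent solutions `(Q^(1),r^(1)), ..., (Q^(k+1),r^(k+1))` of the polynomial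
identity `p(z)Q = r(z)z` (the matrices `Q^(i)` being linearly independent), then
`m ≥ ∑_{j=0}^{k} (n-j)`. -/
theorem m_ge_sum (n m d k : ℕ) (hn : 2 ≤ n) (hd : 1 ≤ d)
    (p : Fin m → MvPolynomial (Fin n) ℂ)
    (hhom : ∀ j, (p j).IsHomogeneous d)
    (hli : LinearIndependent ℂ p)
    (Q : Fin (k + 1) → Matrix (Fin m) (Fin n) ℂ)
    (r : Fin (k + 1) → MvPolynomial (Fin n) ℂ)
    (hr : ∀ i, (r i).IsHomogeneous (d - 1))
    (hsol : ∀ i, ∀ ν : Fin n, (∑ j, Q i j ν • p j) = r i * X ν)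
    (hQli : LinearIndependent ℂ Q) :
    (∑ j ∈ Finset.range (k + 1), (n - j)) ≤ m :=
  m_ge_sum_general n m k p hli Q r hsol hQli
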